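/- arXiv:1610.05375 — 3 statements merged into one kernel-verified Lean document; each statement's English description precedes it below -/
import Mathlib

section
/- There exist index sets N, K, sets A_k, B_k ⊆ N with A_k ⊆ B_k for all k, a set E ⊆ F where F = {φ(i,j) : i ∈ A_k, j ∈ B_k, k ∈ K} (with φ ordering the pair), binary x : N → {0,1} satisfying ∑_{i ∈ A_k} x i = 1 for all k, and nonnegative y satisfying all equations ∑_{i ∈ A_k} y(φ(i,j)) = x j for j ∈ B_k, such that for some (i,j) ∈ F, y(i,j) > x i. -/
/-- `φ` orders a pair of indices. -/
def phi {n : ℕ} (p : Fin n × Fin n) : Fin n × Fin n := if p.1 ≤ p.2 then p else (p.2, p.1)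

/-- Liberti's condition `A_k ⊆ B_k` (with `E ⊆ F`) is not sufficient:
there is an instance where all compact linearization equations hold
but `y (i,j) > x i` for some `(i,j) ∈ F`. -/
theorem stmt8 :
    ∃ (n κ : ℕ) (A B : Fin κ → Finset (Fin n))
      (E F : Finset (Fin n × Fin n)) (x : Fin n → ℝ) (y : Fin n → Fin n → ℝ),
      (∀ k, A k ⊆ B k) ∧
      F = (Finset.univ : Finset (Fin κ)).biUnion
            (fun k => ((A k) ×ˢ (B k)).image phi) ∧
      E ⊆ F ∧
      (∀ i, x i = 0 ∨ x i = 1) ∧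
      (∀ k, ∑ i ∈ A k, x i = 1) ∧
      (∀ i j, 0 ≤ y i j) ∧
      (∀ k, ∀ j ∈ B k, ∑ i ∈ A k, y (phi (i, j)).1 (phi (i, j)).2 = x j) ∧
      ∃ p ∈ F, y p.1 p.2 > x p.1 := by
  refine ⟨3, 1, fun _ => {0, 1}, fun _ => {0, 1, 2}, ∅,
    (Finset.univ : Finset (Fin 1)).biUnion
      (fun _ => (({0, 1} : Finset (Fin 3)) ×ˢ ({0, 1, 2} : Finset (Fin 3))).image phi),
    ![0, 1, 1],
    fun i j => if (i = 1 ∧ j = 1) ∨ (i = 0 ∧ j = 2) then 1 else 0,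
    ?_, rfl, by simp, ?_, ?_, ?_, ?_, ?_⟩
  · intro k; simp only []; decide
  · intro i; fin_cases i <;> simp
  · intro k
    rw [Finset.sum_pair (by decide)]
    norm_num
  · intro i j
    simp only []; split <;> norm_num
  · intro k j hj
    rw [Finset.sum_pair (by decide)]
    fin_cases j <;> simp [phi]
  · refine ⟨(0, 2), ?_, by norm_num⟩
    simp only [Finset.mem_biUnion]
    exact ⟨0, Finset.mem_univ _, Finset.mem_image.mpr ⟨(0, 2), by decide, by decide⟩⟩
end

section
/- Let (F, B) be the fixed point computed by the algorithm starting from F = E (with A_k pairwise disjoint covering N). Then E ⊆ F, and for every (i,j) ∈ F there exists k with i ∈ A_k and j ∈ B_k, and there exists l with j ∈ A_l and i ∈ B_l. -/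
/-- One iteration of Algorithm 1. -/
def step {n : ℕ} {K : Type*} [DecidableEq K] (A : K → Finset (Fin n)) (Kf : Fin n → K)
    (s : Finset (Fin n × Fin n) × (K → Finset (Fin n))) :
    Finset (Fin n × Fin n) × (K → Finset (Fin n)) :=
  (s.1 ∪ s.1.biUnion (fun p =>
      ((A (Kf p.1)).image (fun a => phi (a, p.2))) ∪
      ((A (Kf p.2)).image (fun a => phi (a, p.1)))),
   fun k => s.2 k ∪ ((s.1.filter (fun p => Kf p.1 = k)).image Prod.snd) ∪
      ((s.1.filter (fun p => Kf p.2 = k)).image Prod.fst))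

lemma step_fst_mono {n : ℕ} {K : Type*} [DecidableEq K] (A : K → Finset (Fin n))
    (Kf : Fin n → K) (s : Finset (Fin n × Fin n) × (K → Finset (Fin n))) :
    s.1 ⊆ (step A Kf s).1 := Finset.subset_union_left

lemma step_fst_congr {n : ℕ} {K : Type*} [DecidableEq K] (A : K → Finset (Fin n))
    (Kf : Fin n → K) (s t : Finset (Fin n × Fin n) × (K → Finset (Fin n)))
    (h : s.1 = t.1) : (step A Kf s).1 = (step A Kf t).1 := by
  simp only [step, h]

/-- The fixed point `(F, B)` of Algorithm 1 covers `E` and satisfies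
Conditions 1 and 2 of the revised compact linearization. -/
theorem stmt15 {n : ℕ} {K : Type*} [DecidableEq K] (A : K → Finset (Fin n))
    (hcover : ∀ i : Fin n, ∃ k, i ∈ A k)
    (hdisj : ∀ k l, k ≠ l → Disjoint (A k) (A l))
    (Kf : Fin n → K) (hKf : ∀ i, i ∈ A (Kf i))
    (E : Finset (Fin n × Fin n)) (hE : ∀ p ∈ E, p.1 ≤ p.2)
    (s : Finset (Fin n × Fin n) × (K → Finset (Fin n)))
    (hs : s = (step A Kf)^[n * n] (E, fun _ => ∅)) :
    E ⊆ s.1 ∧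
    ∀ p ∈ s.1, (∃ k, p.1 ∈ A k ∧ p.2 ∈ s.2 k) ∧ (∃ l, p.2 ∈ A l ∧ p.1 ∈ s.2 l) := by
  subst hs
  set f := step A Kf with hf
  set p0 : Finset (Fin n × Fin n) × (K → Finset (Fin n)) := (E, fun _ => ∅) with hp0
  -- monotonicity of the first component
  have hmono : ∀ m, (f^[m] p0).1 ⊆ (f^[m+1] p0).1 := by
    intro m
    rw [Function.iterate_succ_apply']
    exact step_fst_mono A Kf _
  have hE0 : ∀ m, E ⊆ (f^[m] p0).1 := by
    intro m
    induction m with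
    | zero => simp [hp0]
    | succ m ih => exact ih.trans (hmono m)
  refine ⟨hE0 _, ?_⟩
  intro p hp
  rcases Nat.eq_zero_or_pos n with h0 | hn
  · exfalso; have := p.1.2; omega
  have hnn : n * n = (n * n - 1) + 1 := by
    have := Nat.mul_pos hn hn; omega
  -- propagation of stabilization
  have hprop : ∀ m, (f^[m] p0).1 = (f^[m+1] p0).1 →
      ∀ m', m ≤ m' → (f^[m'] p0).1 = (f^[m'+1] p0).1 := by
    intro m hm m' hm'
    induction m' with
    | zero =>
      have hm0 : m = 0 := Nat.le_zero.mp hm'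
      subst hm0; exact hm
    | succ m' ih =>
      rcases Nat.lt_or_ge m (m' + 1) with h | h
      · have heq := ih (by omega)
        rw [Function.iterate_succ_apply', Function.iterate_succ_apply']
        exact step_fst_congr A Kf _ _ heq
      · have : m = m' + 1 := by omega
        exact this ▸ hm
  -- key: the first component stabilizes by step n*n - 1
  have key : (f^[n * n - 1] p0).1 = (f^[n * n] p0).1 := by
    by_contra hne
    have hstrict : ∀ m ≤ n * n - 1, (f^[m] p0).1 ≠ (f^[m+1] p0).1 := by
      intro m hm heq
      exact hne (hnn ▸ hprop m heq (n * n - 1) hm)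
    -- E is nonempty
    have hEne : E.Nonempty := by
      rcases E.eq_empty_or_nonempty with h | h
      · exfalso
        apply hstrict 0 (by omega)
        simp [hp0, h, hf, step]
      · exact h
    have hcard : ∀ m ≤ n * n - 1, m + 1 ≤ (f^[m] p0).1.card := by
      intro m
      induction m with
      | zero => intro _; simpa [hp0] using Finset.card_pos.mpr hEne
      | succ m ih =>
        intro hm
        have h1 := ih (by omega)
        have hss : (f^[m] p0).1 ⊂ (f^[m+1] p0).1 :=
          lt_of_le_of_ne (hmono m) (hstrict m (by omega))
        have := Finset.card_lt_card hss
        omega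
    have h1 : n * n ≤ (f^[n * n - 1] p0).1.card := by
      have := hcard (n * n - 1) le_rfl
      omega
    have h2 : (f^[n * n] p0).1.card ≤ n * n := by
      have := Finset.card_le_univ (f^[n * n] p0).1
      simpa using this
    have hss : (f^[n * n - 1] p0).1 ⊆ (f^[n * n] p0).1 := hnn ▸ hmono _
    exact hne (Finset.eq_of_subset_of_card_le hss (by omega))
  -- now expand the last step
  set t := f^[n * n - 1] p0 with ht
  have hlast : f^[n * n] p0 = f t := by rw [hnn, Function.iterate_succ_apply']
  have hpt' : p ∈ t.1 := key.symm ▸ hp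
  rw [hlast]
  constructor
  · refine ⟨Kf p.1, hKf p.1, ?_⟩
    show p.2 ∈ (f t).2 (Kf p.1)
    simp only [hf, step]
    apply Finset.mem_union_left
    apply Finset.mem_union_right
    exact Finset.mem_image.mpr ⟨p, Finset.mem_filter.mpr ⟨hpt', rfl⟩, rfl⟩
  · refine ⟨Kf p.2, hKf p.2, ?_⟩
    show p.1 ∈ (f t).2 (Kf p.2)
    simp only [hf, step]
    apply Finset.mem_union_right
    exact Finset.mem_image.mpr ⟨p, Finset.mem_filter.mpr ⟨hpt', rfl⟩, rfl⟩
end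

section
/- Let (F, B) be the fixed point of the algorithm and let (F', B') be any other pair satisfying E ⊆ F', Conditions 1 and 2 (for every (i,j) ∈ F' there exist k, l with i ∈ A_k, j ∈ B'_k and j ∈ A_l, i ∈ B'_l), and closure (j ∈ B'_k implies φ(a,j) ∈ F' for all a ∈ A_k). Then F ⊆ F' and B_k ⊆ B'_k for all k. In particular, the algorithm computes the minimum-cardinality feasible pair when the A_k are pairwise disjoint. -/
/-- The fixed point of Algorithm 1 is the least feasible pair: any `(F', B')`
covering `E`, satisfying Conditions 1 and 2 (forced to go through `K(·)` by
disjointness), and closed under adding `φ(a,j)` for `j ∈ B'_k`, `a ∈ A_k`,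
contains the algorithm's output componentwise. -/
theorem stmt16 {n : ℕ} {K : Type*} [DecidableEq K] (A : K → Finset (Fin n))
    (hcover : ∀ i : Fin n, ∃ k, i ∈ A k)
    (hdisj : ∀ k l, k ≠ l → Disjoint (A k) (A l))
    (Kf : Fin n → K) (hKf : ∀ i, i ∈ A (Kf i))
    (E : Finset (Fin n × Fin n)) (hE : ∀ p ∈ E, p.1 ≤ p.2)
    (s : Finset (Fin n × Fin n) × (K → Finset (Fin n)))
    (hs : s = (step A Kf)^[n * n] (E, fun _ => ∅))
    (F' : Finset (Fin n × Fin n)) (B' : K → Finset (Fin n))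
    (hEF' : E ⊆ F')
    (hcond : ∀ p ∈ F', p.2 ∈ B' (Kf p.1) ∧ p.1 ∈ B' (Kf p.2))
    (hclosed : ∀ k, ∀ j ∈ B' k, ∀ a ∈ A k, phi (a, j) ∈ F') :
    s.1 ⊆ F' ∧ ∀ k, s.2 k ⊆ B' k := by
  subst hs
  induction (n * n) with
  | zero => exact ⟨hEF', fun k => by simp⟩
  | succ m ih =>
    rw [Function.iterate_succ_apply']
    obtain ⟨h1, h2⟩ := ih
    set t := (step A Kf)^[m] (E, fun _ => ∅)
    constructor
    · intro p hp
      simp only [step, Finset.mem_union, Finset.mem_biUnion, Finset.mem_image] at hp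
      rcases hp with hp | ⟨q, hq, hq2⟩
      · exact h1 hp
      rcases hq2 with ⟨a, ha, rfl⟩ | ⟨a, ha, rfl⟩
      · exact hclosed _ _ (hcond q (h1 hq)).1 a ha
      · exact hclosed _ _ (hcond q (h1 hq)).2 a ha
    · intro k x hx
      simp only [step, Finset.mem_union, Finset.mem_image, Finset.mem_filter] at hx
      rcases hx with (hx | ⟨q, ⟨hq, hk⟩, rfl⟩) | ⟨q, ⟨hq, hk⟩, rfl⟩
      · exact h2 k hx
      · exact hk ▸ (hcond q (h1 hq)).1
      · exact hk ▸ (hcond q (h1 hq)).2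
end
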